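/- arXiv:1006.3219 — 4 statements merged into one kernel-verified Lean document; each statement's English description precedes it below -/
import Mathlib

section
/- Let α = [a_1, ..., a_{2t}] be strictly increasing with a_i = a_{i-1} + 1 for i = 3, ..., 2t-1, and let β = [b_1,...,b_{2s}] be strictly increasing. Then β is NOT ≥ α in the Pfaffian order if and only if at least one of the following holds: (i) b_1 < a_1; (ii) b_2 < a_2; (iii) s = t and b_{2t} < a_{2t}; (iv) s > t. -/
/-- The Pfaffian partial order on index lists. -/
def pfLe (x y : List ℕ) : Prop :=
  y.length ≤ x.length ∧ ∀ i < y.length, x.getD i 0 ≤ y.getD i 0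

/-! A violation of `β ≥ α` at a middle index `i` propagates down to index `1`: there `α` grows
by exactly one per step, while a strictly increasing `β` grows by at least one per step. Hence
only the indices `0`, `1` and `2t - 1`, or a length mismatch, can witness `β ≱ α`. -/

theorem not_pfLe_iff {x y : List ℕ} :
    ¬ pfLe x y ↔ x.length < y.length ∨ ∃ i < y.length, y.getD i 0 < x.getD i 0 := by
  simp only [pfLe, not_and_or, not_le, not_forall, exists_prop]

theorem add_sub_le_of_forall_lt_succ {f : ℕ → ℕ} {i j n : ℕ}
    (hf : ∀ k, i ≤ k → k + 1 < n → f k < f (k + 1)) (hij : i ≤ j) (hj : j < n) :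
    f i + (j - i) ≤ f j := by
  induction j, hij using Nat.le_induction with
  | base => simp
  | succ j hij ih =>
    have := hf j hij hj
    have := ih (by omega)
    omega

theorem eq_add_sub_of_forall_succ_eq {f : ℕ → ℕ} {i j n : ℕ}
    (hf : ∀ k, i ≤ k → k + 1 ≤ n → f (k + 1) = f k + 1) (hij : i ≤ j) (hj : j ≤ n) :
    f j = f i + (j - i) := by
  induction j, hij using Nat.le_induction with
  | base => simp
  | succ j hij ih =>
    rw [hf j hij hj, ih (by omega)]
    omega

theorem List.getD_lt_getD_succ_of_isChain {l : List ℕ} (hl : l.IsChain (· < ·)) {k : ℕ}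
    (hk : k + 1 < l.length) : l.getD k 0 < l.getD (k + 1) 0 := by
  rw [getD_eq_getElem l 0 (by omega), getD_eq_getElem l 0 hk]
  exact isChain_iff_getElem.mp hl k hk

theorem getD_one_lt_of_getD_lt {t : ℕ} {α β : List ℕ} (hβ : β.IsChain (· < ·))
    (hmid : ∀ j, 2 ≤ j → j ≤ 2 * t - 2 → α.getD j 0 = α.getD (j - 1) 0 + 1)
    {i : ℕ} (hi1 : 1 ≤ i) (hit : i ≤ 2 * t - 2) (hiβ : i < β.length)
    (hlt : β.getD i 0 < α.getD i 0) : β.getD 1 0 < α.getD 1 0 := by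
  have hαi : α.getD i 0 = α.getD 1 0 + (i - 1) :=
    eq_add_sub_of_forall_succ_eq (f := (α.getD · 0))
      (fun k hk hkt => by simpa using hmid (k + 1) (by omega) hkt) hi1 hit
  have hβi : β.getD 1 0 + (i - 1) ≤ β.getD i 0 :=
    add_sub_le_of_forall_lt_succ (f := (β.getD · 0))
      (fun _ _ hk => List.getD_lt_getD_succ_of_isChain hβ hk) hi1 hiβ
  omega

theorem not_ge_iff_general (t s : ℕ) (ht : 1 ≤ t) (hs : 1 ≤ s) (α β : List ℕ)
    (hlenα : α.length = 2 * t) (hlenβ : β.length = 2 * s)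
    (hcβ : β.Chain' (· < ·))
    (hmid : ∀ j, 2 ≤ j → j ≤ 2 * t - 2 → α.getD j 0 = α.getD (j - 1) 0 + 1) :
    ¬ pfLe α β ↔
      (β.getD 0 0 < α.getD 0 0 ∨ β.getD 1 0 < α.getD 1 0 ∨
        (s = t ∧ β.getD (2 * t - 1) 0 < α.getD (2 * t - 1) 0) ∨ t < s) := by
  rw [not_pfLe_iff, hlenα, hlenβ]
  constructor
  · rintro (hst | ⟨i, hi, hlt⟩)
    · exact Or.inr (Or.inr (Or.inr (by omega)))
    by_cases hst : t < s
    · exact Or.inr (Or.inr (Or.inr hst))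
    obtain rfl | rfl | hi1 := (by omega : i = 0 ∨ i = 1 ∨ 2 ≤ i)
    · exact Or.inl hlt
    · exact Or.inr (Or.inl hlt)
    by_cases hit : i ≤ 2 * t - 2
    · exact Or.inr (Or.inl (getD_one_lt_of_getD_lt hcβ hmid (by omega) hit (by omega) hlt))
    · obtain rfl : i = 2 * t - 1 := by omega
      exact Or.inr (Or.inr (Or.inl ⟨by omega, hlt⟩))
  · rintro (h | h | ⟨rfl, h⟩ | h)
    · exact Or.inr ⟨0, by omega, h⟩
    · exact Or.inr ⟨1, by omega, h⟩
    · exact Or.inr ⟨2 * s - 1, by omega, h⟩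
    · exact Or.inl (by omega)

/-- For `α = [a_1,...,a_{2t}]` strictly increasing with consecutive middle entries and
`β = [b_1,...,b_{2s}]` strictly increasing, `β ≱ α` iff (i) `b_1 < a_1`, or (ii) `b_2 < a_2`,
or (iii) `s = t` and `b_{2t} < a_{2t}`, or (iv) `s > t`. (Lists are 0-indexed.) -/
theorem not_ge_iff (t s : ℕ) (ht : 1 ≤ t) (hs : 1 ≤ s) (α β : List ℕ)
    (hlenα : α.length = 2 * t) (hlenβ : β.length = 2 * s)
    (hcα : α.Chain' (· < ·)) (hcβ : β.Chain' (· < ·))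
    (hmid : ∀ j, 2 ≤ j → j ≤ 2 * t - 2 → α.getD j 0 = α.getD (j - 1) 0 + 1) :
    ¬ pfLe α β ↔
      (β.getD 0 0 < α.getD 0 0 ∨ β.getD 1 0 < α.getD 1 0 ∨
        (s = t ∧ β.getD (2 * t - 1) 0 < α.getD (2 * t - 1) 0) ∨ t < s) :=
  not_ge_iff_general t s ht hs α β hlenα hlenβ hcβ hmid
end

section
/- Let Z be a finite subset of ℕ², let δ(Z) = {(i,j) ∈ Z : ∄(i',j') ∈ Z with i' > i, j' < j} and δ'(Z) = {(i,j) ∈ Z : ∄(i',j') ∈ Z with i' < i, j' > j}, and form the iterated decompositions Z = Z_1 ∪ ... ∪ Z_r via δ and Z = Z'_1 ∪ ... ∪ Z'_s via δ'. Then r = s. -/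
/-- The 'sunlight' shadow boundary `δ(Z)`. -/
def sunShadow (Z : Finset (ℕ × ℕ)) : Finset (ℕ × ℕ) :=
  Z.filter fun p => ¬ ∃ q ∈ Z, p.1 < q.1 ∧ q.2 < p.2

/-- What remains of `Z` after removing the first `h` sunlight layers. -/
def sunRem (Z : Finset (ℕ × ℕ)) : ℕ → Finset (ℕ × ℕ)
  | 0 => Z
  | h + 1 => sunRem Z h \ sunShadow (sunRem Z h)

/-- The 'moonlight' shadow boundary `δ'(Z)`: points `(i,j) ∈ Z` such that no `(i',j') ∈ Z`
has `i' < i` and `j' > j`. -/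
def moonShadow (Z : Finset (ℕ × ℕ)) : Finset (ℕ × ℕ) :=
  Z.filter fun p => ¬ ∃ q ∈ Z, q.1 < p.1 ∧ p.2 < q.2

/-- What remains of `Z` after removing the first `h` moonlight layers. -/
def moonRem (Z : Finset (ℕ × ℕ)) : ℕ → Finset (ℕ × ℕ)
  | 0 => Z
  | h + 1 => moonRem Z h \ moonShadow (moonRem Z h)

lemma sunShadow_nonempty {Z : Finset (ℕ × ℕ)} (hZ : Z.Nonempty) :
    (sunShadow Z).Nonempty := by
  obtain ⟨p, hp, hmax⟩ := Z.exists_max_image (fun p => p.1) hZ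
  exact ⟨p, Finset.mem_filter.2 ⟨hp, fun ⟨q, hq, h1, _⟩ => absurd (hmax q hq) (not_le.2 h1)⟩⟩

lemma moonShadow_nonempty {Z : Finset (ℕ × ℕ)} (hZ : Z.Nonempty) :
    (moonShadow Z).Nonempty := by
  obtain ⟨p, hp, hmax⟩ := Z.exists_max_image (fun p => p.2) hZ
  exact ⟨p, Finset.mem_filter.2 ⟨hp, fun ⟨q, hq, _, h2⟩ => absurd (hmax q hq) (not_le.2 h2)⟩⟩

lemma sunRem_subset (Z : Finset (ℕ × ℕ)) : ∀ h, sunRem Z h ⊆ Z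
  | 0 => subset_rfl
  | h + 1 => fun p hp => sunRem_subset Z h (Finset.mem_sdiff.1 hp).1

lemma moonRem_subset (Z : Finset (ℕ × ℕ)) : ∀ h, moonRem Z h ⊆ Z
  | 0 => subset_rfl
  | h + 1 => fun p hp => moonRem_subset Z h (Finset.mem_sdiff.1 hp).1

lemma sun_step (Z : Finset (ℕ × ℕ)) :
    ∀ h, ∀ p q : ℕ × ℕ, q ∈ sunRem Z h → p ∈ Z → p.1 < q.1 → q.2 < p.2 →
      p ∈ sunRem Z (h + 1) := by
  intro h
  induction h with
  | zero =>
    intro p q hq hp h1 h2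
    refine Finset.mem_sdiff.2 ⟨hp, fun hc => ?_⟩
    exact (Finset.mem_filter.1 hc).2 ⟨q, hq, h1, h2⟩
  | succ h ih =>
    intro p q hq hp h1 h2
    obtain ⟨hq', hqs⟩ := Finset.mem_sdiff.1 hq
    obtain ⟨q', hq'', h1', h2'⟩ := not_not.1 fun hn =>
      hqs (Finset.mem_filter.2 ⟨hq', hn⟩)
    have hps : p ∈ sunRem Z (h + 1) := ih p q' hq'' hp (h1.trans h1') (h2'.trans h2)
    refine Finset.mem_sdiff.2 ⟨hps, fun hc => ?_⟩
    exact (Finset.mem_filter.1 hc).2 ⟨q, hq, h1, h2⟩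

lemma moon_step (Z : Finset (ℕ × ℕ)) :
    ∀ h, ∀ p q : ℕ × ℕ, q ∈ moonRem Z h → p ∈ Z → q.1 < p.1 → p.2 < q.2 →
      p ∈ moonRem Z (h + 1) := by
  intro h
  induction h with
  | zero =>
    intro p q hq hp h1 h2
    refine Finset.mem_sdiff.2 ⟨hp, fun hc => ?_⟩
    exact (Finset.mem_filter.1 hc).2 ⟨q, hq, h1, h2⟩
  | succ h ih =>
    intro p q hq hp h1 h2
    obtain ⟨hq', hqs⟩ := Finset.mem_sdiff.1 hq
    obtain ⟨q', hq'', h1', h2'⟩ := not_not.1 fun hn =>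
      hqs (Finset.mem_filter.2 ⟨hq', hn⟩)
    have hps : p ∈ moonRem Z (h + 1) := ih p q' hq'' hp (h1'.trans h1) (h2.trans h2')
    refine Finset.mem_sdiff.2 ⟨hps, fun hc => ?_⟩
    exact (Finset.mem_filter.1 hc).2 ⟨q, hq, h1, h2⟩

/-- A chain of length `h+1` starting at each point of `sunRem Z h`. -/
lemma sun_chain (Z : Finset (ℕ × ℕ)) :
    ∀ h, ∀ p ∈ sunRem Z h, ∃ f : ℕ → ℕ × ℕ, f 0 = p ∧ (∀ k ≤ h, f k ∈ Z) ∧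
      ∀ k < h, (f k).1 < (f (k + 1)).1 ∧ (f (k + 1)).2 < (f k).2 := by
  intro h
  induction h with
  | zero =>
    intro p hp
    exact ⟨fun _ => p, rfl, fun k _ => hp, fun k hk => absurd hk (Nat.not_lt_zero k)⟩
  | succ h ih =>
    intro p hp
    obtain ⟨hp', hps⟩ := Finset.mem_sdiff.1 hp
    obtain ⟨q, hq, h1, h2⟩ := not_not.1 fun hn => hps (Finset.mem_filter.2 ⟨hp', hn⟩)
    obtain ⟨f, hf0, hfZ, hfc⟩ := ih q hq
    refine ⟨fun k => if k = 0 then p else f (k - 1), rfl, ?_, ?_⟩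
    · intro k hk
      rcases Nat.eq_zero_or_pos k with rfl | hk0
      · simpa using sunRem_subset Z (h + 1) hp
      · simp only [Nat.pos_iff_ne_zero.1 hk0, if_neg (Nat.pos_iff_ne_zero.1 hk0)]
        exact hfZ (k - 1) (by omega)
    · intro k hk
      rcases Nat.eq_zero_or_pos k with rfl | hk0
      · simpa [hf0] using ⟨h1, h2⟩
      · have hk0' := Nat.pos_iff_ne_zero.1 hk0
        simp only [if_neg hk0', if_neg (Nat.succ_ne_zero k)]
        have : k + 1 - 1 = (k - 1) + 1 := by omega
        rw [this]
        exact hfc (k - 1) (by omega)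

lemma sun_of_chain (Z : Finset (ℕ × ℕ)) :
    ∀ h, ∀ f : ℕ → ℕ × ℕ, (∀ k ≤ h, f k ∈ Z) →
      (∀ k < h, (f k).1 < (f (k + 1)).1 ∧ (f (k + 1)).2 < (f k).2) →
      f 0 ∈ sunRem Z h := by
  intro h
  induction h with
  | zero => intro f hfZ _; exact hfZ 0 le_rfl
  | succ h ih =>
    intro f hfZ hfc
    have h1 : f 1 ∈ sunRem Z h :=
      ih (fun k => f (k + 1)) (fun k hk => hfZ (k + 1) (by omega))
        (fun k hk => hfc (k + 1) (by omega))
    exact sun_step Z h (f 0) (f 1) h1 (hfZ 0 (by omega))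
      (hfc 0 (by omega)).1 (hfc 0 (by omega)).2

lemma moon_of_chain (Z : Finset (ℕ × ℕ)) :
    ∀ h, ∀ f : ℕ → ℕ × ℕ, (∀ k ≤ h, f k ∈ Z) →
      (∀ k < h, (f (k + 1)).1 < (f k).1 ∧ (f k).2 < (f (k + 1)).2) →
      f 0 ∈ moonRem Z h := by
  intro h
  induction h with
  | zero => intro f hfZ _; exact hfZ 0 le_rfl
  | succ h ih =>
    intro f hfZ hfc
    have h1 : f 1 ∈ moonRem Z h :=
      ih (fun k => f (k + 1)) (fun k hk => hfZ (k + 1) (by omega))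
        (fun k hk => hfc (k + 1) (by omega))
    exact moon_step Z h (f 0) (f 1) h1 (hfZ 0 (by omega))
      (hfc 0 (by omega)).1 (hfc 0 (by omega)).2

lemma moon_chain (Z : Finset (ℕ × ℕ)) :
    ∀ h, ∀ p ∈ moonRem Z h, ∃ f : ℕ → ℕ × ℕ, f 0 = p ∧ (∀ k ≤ h, f k ∈ Z) ∧
      ∀ k < h, (f (k + 1)).1 < (f k).1 ∧ (f k).2 < (f (k + 1)).2 := by
  intro h
  induction h with
  | zero =>
    intro p hp
    exact ⟨fun _ => p, rfl, fun k _ => hp, fun k hk => absurd hk (Nat.not_lt_zero k)⟩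
  | succ h ih =>
    intro p hp
    obtain ⟨hp', hps⟩ := Finset.mem_sdiff.1 hp
    obtain ⟨q, hq, h1, h2⟩ := not_not.1 fun hn => hps (Finset.mem_filter.2 ⟨hp', hn⟩)
    obtain ⟨f, hf0, hfZ, hfc⟩ := ih q hq
    refine ⟨fun k => if k = 0 then p else f (k - 1), rfl, ?_, ?_⟩
    · intro k hk
      rcases Nat.eq_zero_or_pos k with rfl | hk0
      · simpa using moonRem_subset Z (h + 1) hp
      · simp only [if_neg (Nat.pos_iff_ne_zero.1 hk0)]
        exact hfZ (k - 1) (by omega)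
    · intro k hk
      rcases Nat.eq_zero_or_pos k with rfl | hk0
      · simpa [hf0] using ⟨h1, h2⟩
      · have hk0' := Nat.pos_iff_ne_zero.1 hk0
        simp only [if_neg hk0', if_neg (Nat.succ_ne_zero k)]
        have : k + 1 - 1 = (k - 1) + 1 := by omega
        rw [this]
        exact hfc (k - 1) (by omega)

lemma sunRem_nonempty_iff_moonRem (Z : Finset (ℕ × ℕ)) (h : ℕ) :
    (sunRem Z h).Nonempty ↔ (moonRem Z h).Nonempty := by
  constructor
  · rintro ⟨p, hp⟩
    obtain ⟨f, hf0, hfZ, hfc⟩ := sun_chain Z h p hp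
    refine ⟨(fun k => f (h - k)) 0, moon_of_chain Z h (fun k => f (h - k))
      (fun k hk => hfZ (h - k) (by omega)) (fun k hk => ?_)⟩
    have : h - k = (h - (k + 1)) + 1 := by omega
    simp only [this]
    exact hfc (h - (k + 1)) (by omega)
  · rintro ⟨p, hp⟩
    obtain ⟨f, hf0, hfZ, hfc⟩ := moon_chain Z h p hp
    refine ⟨(fun k => f (h - k)) 0, sun_of_chain Z h (fun k => f (h - k))
      (fun k hk => hfZ (h - k) (by omega)) (fun k hk => ?_)⟩
    have : h - k = (h - (k + 1)) + 1 := by omega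
    simp only [this]
    exact hfc (h - (k + 1)) (by omega)

/-- The sunlight and moonlight decompositions of a finite set `Z ⊆ ℕ²` have the same
number of (nonempty) layers. -/
theorem sun_layers_eq_moon_layers (Z : Finset (ℕ × ℕ)) :
    Set.ncard {h : ℕ | (sunShadow (sunRem Z h)).Nonempty} =
      Set.ncard {h : ℕ | (moonShadow (moonRem Z h)).Nonempty} := by
  congr 1
  ext h
  simp only [Set.mem_setOf_eq]
  constructor
  · intro hs
    exact moonShadow_nonempty ((sunRem_nonempty_iff_moonRem Z h).1
      (hs.mono (Finset.filter_subset _ _)))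
  · intro hs
    exact sunShadow_nonempty ((sunRem_nonempty_iff_moonRem Z h).2
      (hs.mono (Finset.filter_subset _ _)))
end

section
/- Let X = (X_{ij}) be a skew-symmetric n×n matrix of indeterminates over a field K and α = [a_1,...,a_{2t}] a strictly increasing sequence in {1,...,n}. Let X' be a skew-symmetric matrix of indeterminates of size n - a_1 + 1 and β = [1, a_2 - a_1 + 1, ..., a_{2t} - a_1 + 1]. Then there is a K-algebra isomorphism K[X]/I_α(X) ≅ K[X']/I_β(X'), where I_α(X) (resp. I_β(X')) is the ideal generated by all Pfaffians γ of X (resp. X') with γ ≱ α (resp. γ ≱ β). -/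
/-- The index set of the variables `X_{ij}`, `1 ≤ i < j ≤ n` (0-indexed). -/
abbrev UT (n : ℕ) := {p : Fin n × Fin n // p.1 < p.2}

/-- The generic skew-symmetric `n × n` matrix over `K[X_{ij} : i < j]`. -/
noncomputable def genSkew (K : Type*) [CommRing K] (n : ℕ) :
    Matrix (Fin n) (Fin n) (MvPolynomial (UT n) K) :=
  fun i j =>
    if h : i < j then MvPolynomial.X ⟨(i, j), h⟩
    else if h' : j < i then - MvPolynomial.X ⟨(j, i), h'⟩ else 0

/-- The Pfaffian of a `2m × 2m` matrix, as a sum over perfect matchings. -/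
def pfaffian {R : Type*} [CommRing R] (m : ℕ)
    (A : Matrix (Fin (2 * m)) (Fin (2 * m)) R) : R :=
  ∑ σ ∈ Finset.univ.filter (fun σ : Equiv.Perm (Fin (2 * m)) =>
      (∀ k : Fin m, σ ⟨2 * k.1, by have := k.2; omega⟩ < σ ⟨2 * k.1 + 1, by have := k.2; omega⟩) ∧
      (∀ k l : Fin m, k < l →
        σ ⟨2 * k.1, by have := k.2; omega⟩ < σ ⟨2 * l.1, by have := l.2; omega⟩)),
    (Equiv.Perm.sign σ : ℤ) •
      ∏ k : Fin m, A (σ ⟨2 * k.1, by have := k.2; omega⟩) (σ ⟨2 * k.1 + 1, by have := k.2; omega⟩)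

/-- The Pfaffian order on index sequences: `[a_1,...,a_{2t}] ≤ [c_1,...,c_{2s}]` iff
`t ≥ s` and `a_i ≤ c_i` for `i = 1,...,2s`. -/
def pfLeIdx {n n' : ℕ} (t s : ℕ) (a : Fin (2 * t) → Fin n) (c : Fin (2 * s) → Fin n') :
    Prop :=
  ∃ h : s ≤ t, ∀ i : Fin (2 * s),
    (a ⟨i.1, by have := i.2; omega⟩ : ℕ) ≤ (c i : ℕ)

/-- The ideal of `K[X_{ij}]` cogenerated by the Pfaffian with index sequence `a`:
it is generated by all Pfaffians `γ` of the generic skew-symmetric matrix with `γ ≱ α`. -/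
noncomputable def cogenIdeal (K : Type*) [Field K] (n t : ℕ) (a : Fin (2 * t) → Fin n) :
    Ideal (MvPolynomial (UT n) K) :=
  Ideal.span {p | ∃ (s : ℕ) (c : Fin (2 * s) → Fin n), StrictMono c ∧
    ¬ pfLeIdx t s a c ∧ p = pfaffian s ((genSkew K n).submatrix c c)}


/-!
Each variable `X_{ij}` with `i < a_1` is the Pfaffian `[i, j] ≱ α`, so it lies in `I_α(X)`.
Setting these variables to zero and shifting the remaining indices down by `a_1 - 1` gives an
algebra map `K[X] → K[X']` with the index shift up as a section, and the two maps are inverse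
modulo `I_α(X)`. A Pfaffian `γ ≱ α` goes to `0` if one of its indices is killed and
otherwise to its shift `γ' ≱ β`; conversely the shift of a Pfaffian `γ' ≱ β` is `≱ α`.
-/

open MvPolynomial

noncomputable def Ideal.quotientEquivAlgOfInverse {R A B : Type*} [CommRing R] [CommRing A]
    [CommRing B] [Algebra R A] [Algebra R B] {I : Ideal A} {J : Ideal B} (f : A →ₐ[R] B)
    (g : B →ₐ[R] A) (hf : I ≤ J.comap f) (hg : J ≤ I.comap g)
    (hfg : (Quotient.mkₐ R J).comp (f.comp g) = Quotient.mkₐ R J)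
    (hgf : (Quotient.mkₐ R I).comp (g.comp f) = Quotient.mkₐ R I) :
    (A ⧸ I) ≃ₐ[R] B ⧸ J :=
  AlgEquiv.ofAlgHom (quotientMapₐ J f hf) (quotientMapₐ I g hg)
    (Quotient.algHom_ext R (by ext x; simpa using congr($hfg x)))
    (Quotient.algHom_ext R (by ext x; simpa using congr($hgf x)))

section Pfaffian

variable {R : Type*} [CommRing R]

lemma RingHom.map_pfaffian {S : Type*} [CommRing S] (f : R →+* S) (m : ℕ)
    (A : Matrix (Fin (2 * m)) (Fin (2 * m)) R) : f (pfaffian m A) = pfaffian m (A.map f) := by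
  simp only [pfaffian, map_sum, map_zsmul, map_prod]
  rfl

lemma pfaffian_eq_zero_of_row_col_eq_zero {m : ℕ} (A : Matrix (Fin (2 * m)) (Fin (2 * m)) R)
    (r : Fin (2 * m)) (hrow : ∀ j, A r j = 0) (hcol : ∀ j, A j r = 0) : pfaffian m A = 0 := by
  refine Finset.sum_eq_zero fun σ _ => ?_
  -- the matching `σ` pairs `r = σ j` in its `j / 2`-th pair, whose factor is `A r _` or `A _ r`
  obtain ⟨j, rfl⟩ := σ.surjective r
  have hk : (j : ℕ) / 2 < m := by omega
  refine smul_eq_zero_of_right _ (Finset.prod_eq_zero (Finset.mem_univ ⟨j / 2, hk⟩) ?_)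
  obtain h | h : 2 * ((j : ℕ) / 2) = j ∨ 2 * ((j : ℕ) / 2) + 1 = j := by omega
  · convert hrow _ using 3
    exact Fin.ext h
  · convert hcol _ using 3
    exact Fin.ext h

lemma pfaffian_one (A : Matrix (Fin (2 * 1)) (Fin (2 * 1)) R) : pfaffian 1 A = A 0 1 := by
  have h : Finset.univ.filter (fun σ : Equiv.Perm (Fin (2 * 1)) => σ 0 < σ 1) = {1} := by decide
  simp [pfaffian, h]

end Pfaffian

structure Matrix.IsAlternating {ι R : Type*} [Ring R] (M : Matrix ι ι R) : Prop where
  diag_eq_zero : ∀ i, M i i = 0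
  apply_swap : ∀ i j, M j i = -M i j

lemma Matrix.IsAlternating.submatrix {ι κ R : Type*} [Ring R] {M : Matrix ι ι R}
    (hM : M.IsAlternating) (f : κ → ι) : (M.submatrix f f).IsAlternating :=
  ⟨fun i => hM.diag_eq_zero (f i), fun i j => hM.apply_swap (f i) (f j)⟩

section GenericSkew

variable {K : Type*} [CommRing K] {n : ℕ}

lemma genSkew_of_lt {i j : Fin n} (h : i < j) : genSkew K n i j = X ⟨(i, j), h⟩ := dif_pos h

lemma isAlternating_genSkew : (genSkew K n).IsAlternating := by
  refine ⟨fun i => by simp [genSkew], fun i j => ?_⟩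
  rcases lt_trichotomy i j with h | rfl | h
  · simp [genSkew, h, not_lt_of_gt h]
  · simp [genSkew]
  · simp [genSkew, h, not_lt_of_gt h]

noncomputable def skewEval {S : Type*} [CommRing S] [Algebra K S]
    (M : Matrix (Fin n) (Fin n) S) : MvPolynomial (UT n) K →ₐ[K] S :=
  aeval fun v => M v.1.1 v.1.2

variable {S : Type*} [CommRing S] [Algebra K S] {M : Matrix (Fin n) (Fin n) S}

lemma skewEval_X (v : UT n) : skewEval (K := K) M (X v) = M v.1.1 v.1.2 :=
  aeval_X _ v

lemma skewEval_genSkew (hM : M.IsAlternating) (i j : Fin n) :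
    skewEval (K := K) M (genSkew K n i j) = M i j := by
  rcases lt_trichotomy i j with h | rfl | h
  · simp [skewEval, genSkew, h]
  · simp [genSkew, hM.diag_eq_zero]
  · simp [skewEval, genSkew, h, not_lt_of_gt h, hM.apply_swap j i]

lemma skewEval_pfaffian (hM : M.IsAlternating) {s : ℕ} (c : Fin (2 * s) → Fin n) :
    skewEval M (pfaffian s ((genSkew K n).submatrix c c)) = pfaffian s (M.submatrix c c) := by
  rw [← AlgHom.coe_toRingHom, RingHom.map_pfaffian]
  congr 1
  ext i j
  exact skewEval_genSkew hM (c i) (c j)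

end GenericSkew

lemma pfLeIdx.of_le {n n' n'' n''' t s : ℕ} {a : Fin (2 * t) → Fin n}
    {b : Fin (2 * t) → Fin n'} {c : Fin (2 * s) → Fin n''} {c' : Fin (2 * s) → Fin n'''}
    (h : pfLeIdx t s a c)
    (hab : ∀ j i, (a j : ℕ) ≤ c i → (b j : ℕ) ≤ c' i) : pfLeIdx t s b c' :=
  ⟨h.1, fun i => hab _ i (h.2 i)⟩

section CogenIdeal

variable {K : Type*} [Field K] {n t : ℕ} {a : Fin (2 * t) → Fin n}

lemma pfaffian_mem_cogenIdeal {s : ℕ} {c : Fin (2 * s) → Fin n} (hc : StrictMono c)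
    (hac : ¬ pfLeIdx t s a c) : pfaffian s ((genSkew K n).submatrix c c) ∈ cogenIdeal K n t a :=
  Ideal.subset_span ⟨s, c, hc, hac, rfl⟩

lemma cogenIdeal_le_comap_skewEval {S : Type*} [CommRing S] [Algebra K S] {J : Ideal S}
    {M : Matrix (Fin n) (Fin n) S} (hM : M.IsAlternating)
    (h : ∀ s (c : Fin (2 * s) → Fin n), StrictMono c → ¬ pfLeIdx t s a c →
      pfaffian s (M.submatrix c c) ∈ J) :
    cogenIdeal K n t a ≤ J.comap (skewEval M) :=
  Ideal.span_le.2 <| by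
    rintro _ ⟨s, c, hc, hac, rfl⟩
    simpa [skewEval_pfaffian hM] using h s c hc hac

lemma X_mem_cogenIdeal (h2t : 0 < 2 * t) {v : UT n} (hv : v.1.1 < a ⟨0, h2t⟩) :
    X v ∈ cogenIdeal K n t a := by
  have hc : StrictMono ![v.1.1, v.1.2] := by
    intro i j hij
    fin_cases i <;> fin_cases j <;> simp_all [v.2]
  have hac : ¬ pfLeIdx t 1 a ![v.1.1, v.1.2] := by
    intro h
    have := h.2 0
    simp only [Fin.coe_ofNat_eq_mod, Nat.zero_mod, Matrix.cons_val_zero, Fin.val_fin_le] at this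
    omega
  have := pfaffian_mem_cogenIdeal (K := K) hc hac
  rw [pfaffian_one] at this
  simpa [genSkew_of_lt v.2] using this

end CogenIdeal

section Shift

variable (K : Type*) [CommRing K] (n m : ℕ)

def shiftIdx (i : Fin (n - m)) : Fin n := ⟨i + m, by omega⟩

variable {n m} in
lemma strictMono_shiftIdx : StrictMono (shiftIdx n m) :=
  fun _ _ h => Fin.mk_lt_mk.2 (Nat.add_lt_add_right h m)

/-- `X` with the variables `X_{ij}`, `i < m`, set to zero and the others renamed to `X'`. -/
noncomputable def genSkewShifted : Matrix (Fin n) (Fin n) (MvPolynomial (UT (n - m)) K) :=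
  fun i j =>
    if h : m ≤ i ∧ m ≤ j then genSkew K (n - m) ⟨i - m, by omega⟩ ⟨j - m, by omega⟩
    else 0

lemma isAlternating_genSkewShifted : (genSkewShifted K n m).IsAlternating := by
  refine ⟨fun i => ?_, fun i j => ?_⟩ <;> unfold genSkewShifted
  · split_ifs <;> simp [isAlternating_genSkew.diag_eq_zero]
  · by_cases h : m ≤ (i : ℕ) ∧ m ≤ (j : ℕ)
    · rw [dif_pos h, dif_pos h.symm, isAlternating_genSkew.apply_swap]
    · rw [dif_neg h, dif_neg (by tauto), neg_zero]

lemma genSkewShifted_submatrix_shiftIdx :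
    (genSkewShifted K n m).submatrix (shiftIdx n m) (shiftIdx n m) = genSkew K (n - m) := by
  ext i j
  simp [genSkewShifted, shiftIdx]

variable {K n m} in
lemma genSkewShifted_of_lt {i j : Fin n} (h : (i : ℕ) < m ∨ (j : ℕ) < m) :
    genSkewShifted K n m i j = 0 :=
  dif_neg (by omega)

noncomputable def shiftDownHom : MvPolynomial (UT n) K →ₐ[K] MvPolynomial (UT (n - m)) K :=
  skewEval (genSkewShifted K n m)

noncomputable def shiftUpHom : MvPolynomial (UT (n - m)) K →ₐ[K] MvPolynomial (UT n) K :=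
  skewEval ((genSkew K n).submatrix (shiftIdx n m) (shiftIdx n m))

lemma shiftDownHom_comp_shiftUpHom :
    (shiftDownHom K n m).comp (shiftUpHom K n m) = AlgHom.id K _ := by
  refine MvPolynomial.algHom_ext fun v => ?_
  rw [AlgHom.comp_apply, shiftUpHom, skewEval_X, Matrix.submatrix_apply, shiftDownHom,
    skewEval_genSkew (isAlternating_genSkewShifted K n m), AlgHom.id_apply, ← genSkew_of_lt v.2]
  exact congrFun₂ (genSkewShifted_submatrix_shiftIdx K n m) v.1.1 v.1.2

variable {K n m} in
lemma mkₐ_comp_shiftUpHom_comp_shiftDownHom {I : Ideal (MvPolynomial (UT n) K)}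
    (hI : ∀ v : UT n, (v.1.1 : ℕ) < m → X v ∈ I) :
    (Ideal.Quotient.mkₐ K I).comp ((shiftUpHom K n m).comp (shiftDownHom K n m)) =
      Ideal.Quotient.mkₐ K I := by
  refine MvPolynomial.algHom_ext fun v => ?_
  rw [AlgHom.comp_apply, AlgHom.comp_apply, shiftDownHom, skewEval_X]
  by_cases hv : m ≤ (v.1.1 : ℕ)
  · have hv2 : (v.1.1 : ℕ) < v.1.2 := v.2
    rw [genSkewShifted, dif_pos ⟨hv, by omega⟩, shiftUpHom,
      skewEval_genSkew (isAlternating_genSkew.submatrix _)]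
    simp [shiftIdx, Nat.sub_add_cancel hv, Nat.sub_add_cancel (hv.trans hv2.le),
      genSkew_of_lt v.2]
  · rw [genSkewShifted_of_lt (.inl (by omega)), map_zero, map_zero, eq_comm]
    exact Ideal.Quotient.eq_zero_iff_mem.2 (hI v (by omega))

end Shift

section ShiftCogenIdeal

variable {K : Type*} [Field K] {n m t : ℕ} {a : Fin (2 * t) → Fin n}
  {b : Fin (2 * t) → Fin (n - m)}

lemma cogenIdeal_le_comap_shiftDownHom
    (hab : ∀ j (x : Fin (n - m)), (b j : ℕ) ≤ x → (a j : ℕ) ≤ x + m) :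
    cogenIdeal K n t a ≤ (cogenIdeal K (n - m) t b).comap (shiftDownHom K n m) := by
  refine cogenIdeal_le_comap_skewEval (isAlternating_genSkewShifted K n m) fun s c hc hac => ?_
  by_cases hcm : ∀ i, m ≤ (c i : ℕ)
  · obtain ⟨c', rfl⟩ : ∃ c', c = shiftIdx n m ∘ c' :=
      ⟨fun i => ⟨c i - m, by have := hcm i; omega⟩,
        funext fun i => Fin.ext (by simp [shiftIdx, hcm i])⟩
    rw [← Matrix.submatrix_submatrix, genSkewShifted_submatrix_shiftIdx]
    exact pfaffian_mem_cogenIdeal (fun i j h => strictMono_shiftIdx.lt_iff_lt.1 (hc h))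
      fun h => hac (h.of_le fun j i => hab j (c' i))
  · obtain ⟨i, hi⟩ := not_forall.1 hcm
    rw [pfaffian_eq_zero_of_row_col_eq_zero ((genSkewShifted K n m).submatrix c c) i
      (fun _ => genSkewShifted_of_lt (.inl (not_le.1 hi)))
      (fun _ => genSkewShifted_of_lt (.inr (not_le.1 hi)))]
    exact zero_mem _

lemma cogenIdeal_le_comap_shiftUpHom
    (hab : ∀ j (x : Fin (n - m)), (a j : ℕ) ≤ x + m → (b j : ℕ) ≤ x) :
    cogenIdeal K (n - m) t b ≤ (cogenIdeal K n t a).comap (shiftUpHom K n m) := by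
  refine cogenIdeal_le_comap_skewEval (isAlternating_genSkew.submatrix _) fun s c hc hbc => ?_
  rw [Matrix.submatrix_submatrix]
  exact pfaffian_mem_cogenIdeal (strictMono_shiftIdx.comp hc)
    fun h => hbc (h.of_le fun j i => hab j (c i))

end ShiftCogenIdeal

theorem reduction_iso_general (K : Type*) [Field K] (n t : ℕ) (h2t : 0 < 2 * t)
    (a : Fin (2 * t) → Fin n)
    (b : Fin (2 * t) → Fin (n - (a ⟨0, h2t⟩ : ℕ)))
    (hb : ∀ i, (b i : ℕ) = (a i : ℕ) - (a ⟨0, h2t⟩ : ℕ)) :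
    Nonempty
      ((MvPolynomial (UT n) K ⧸ cogenIdeal K n t a) ≃ₐ[K]
        (MvPolynomial (UT (n - (a ⟨0, h2t⟩ : ℕ))) K ⧸
          cogenIdeal K (n - (a ⟨0, h2t⟩ : ℕ)) t b)) := by
  refine ⟨Ideal.quotientEquivAlgOfInverse (shiftDownHom K n _) (shiftUpHom K n _)
    (cogenIdeal_le_comap_shiftDownHom fun j x => by rw [hb]; omega)
    (cogenIdeal_le_comap_shiftUpHom fun j x => by rw [hb]; omega) ?_
    (mkₐ_comp_shiftUpHom_comp_shiftDownHom fun v hv => X_mem_cogenIdeal h2t hv)⟩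
  rw [shiftDownHom_comp_shiftUpHom, AlgHom.comp_id]

/-- `K[X]/I_α(X) ≅ K[X']/I_β(X')`, where `X'` has size `n - a_1 + 1` and
`β = [1, a_2 - a_1 + 1, ..., a_{2t} - a_1 + 1]` (everything 0-indexed: `b i = a i - a 0`). -/
theorem reduction_iso (K : Type*) [Field K] (n t : ℕ) (ht : 1 ≤ t) (h2t : 0 < 2 * t)
    (a : Fin (2 * t) → Fin n) (ha : StrictMono a)
    (b : Fin (2 * t) → Fin (n - (a ⟨0, h2t⟩ : ℕ)))
    (hb : ∀ i, (b i : ℕ) = (a i : ℕ) - (a ⟨0, h2t⟩ : ℕ)) :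
    Nonempty
      ((MvPolynomial (UT n) K ⧸ cogenIdeal K n t a) ≃ₐ[K]
        (MvPolynomial (UT (n - (a ⟨0, h2t⟩ : ℕ))) K ⧸
          cogenIdeal K (n - (a ⟨0, h2t⟩ : ℕ)) t b)) :=
  reduction_iso_general K n t h2t a b hb
end

section
/- Fix t ≥ 1 and a ≤ b - 2t + 2, and let α = [1, a, a+1, ..., a+2t-3, b]. For a strictly increasing sequence β = [b_1,...,b_{2s}] with s ≤ t, β ≱ α holds if and only if (b_2 ≤ a - 1) or (s = t and b_{2t} ≤ b - 1). Consequently, the set of Pfaffians of size at most 2t among the natural generators of I_α(X) is {[c,d,*,...,*] : c < d ≤ a-1} ∪ {[e_1,...,e_{2t}] : e_{2t} ≤ b-1}. -/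
lemma List.IsChain.getD_add_sub_le {l : List ℕ} (hl : l.IsChain (· < ·)) {i j : ℕ}
    (hij : i ≤ j) (hj : j < l.length) : l.getD i 0 + (j - i) ≤ l.getD j 0 := by
  induction j, hij using Nat.le_induction with
  | base => simp
  | succ k hik ih =>
    have hstep : l[k] < l[k + 1] := List.isChain_iff_getElem.mp hl k hj
    rw [List.getD_eq_getElem l 0 (show k < l.length by omega)] at ih
    rw [List.getD_eq_getElem _ _ hj]
    omega

def pfaffianAlpha (t a b : ℕ) : List ℕ :=
  1 :: ((List.range (2 * t - 2)).map (· + a) ++ [b])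

section pfaffianAlpha

variable {t a b : ℕ}

lemma pfaffianAlpha_length (ht : 1 ≤ t) : (pfaffianAlpha t a b).length = 2 * t := by
  simp only [pfaffianAlpha, List.length_cons, List.length_append, List.length_map,
    List.length_range, List.length_nil]
  omega

lemma pfaffianAlpha_getD_zero : (pfaffianAlpha t a b).getD 0 0 = 1 := rfl

lemma pfaffianAlpha_getD_of_lt {i : ℕ} (hi : 1 ≤ i) (hit : i < 2 * t - 1) :
    (pfaffianAlpha t a b).getD i 0 = a + i - 1 := by
  obtain ⟨j, rfl⟩ : ∃ j, i = j + 1 := ⟨i - 1, by omega⟩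
  have hj : j < ((List.range (2 * t - 2)).map (· + a)).length := by simp; omega
  rw [pfaffianAlpha, List.getD_cons_succ, List.getD_eq_getElem _ _ (by simp; omega),
    List.getElem_append_left hj, List.getElem_map, List.getElem_range]
  omega

lemma pfaffianAlpha_getD_last (ht : 1 ≤ t) :
    (pfaffianAlpha t a b).getD (2 * t - 1) 0 = b := by
  obtain ⟨j, hj⟩ : ∃ j, 2 * t - 1 = j + 1 := ⟨2 * t - 2, by omega⟩
  rw [hj, pfaffianAlpha, List.getD_cons_succ, List.getD_eq_getElem _ _ (by simp; omega),
    List.getElem_append_right (by simp; omega)]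
  simp only [List.length_map, List.length_range, List.getElem_singleton]

lemma le_pfaffianAlpha_getD (ht : 1 ≤ t) (hab : a + 2 * t - 2 ≤ b) {i : ℕ} (hi : 1 ≤ i)
    (hit : i ≤ 2 * t - 1) : a + i - 1 ≤ (pfaffianAlpha t a b).getD i 0 := by
  rcases Nat.lt_or_ge i (2 * t - 1) with hlt | hge
  · rw [pfaffianAlpha_getD_of_lt hi hlt]
  · rw [show i = 2 * t - 1 by omega, pfaffianAlpha_getD_last ht]
    omega

/-- In 1-indexed notation: once `b_2 ≥ a`, strict increase gives `b_i ≥ a + i - 2 = α_i`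
for all middle indices, so the only entries of `α` that can fail to be dominated are `α_1 = 1`
and, when `s = t`, `α_{2t} = b`. -/
lemma pfLe_pfaffianAlpha (ht : 1 ≤ t) {s : ℕ} (hst : s ≤ t) {β : List ℕ}
    (hβ : β.IsChain (· < ·)) (hlen : β.length = 2 * s) (hpos : ∀ x ∈ β, 1 ≤ x)
    (h1 : a ≤ β.getD 1 0) (hlast : s = t → b ≤ β.getD (2 * t - 1) 0) :
    pfLe (pfaffianAlpha t a b) β := by
  refine ⟨by rw [pfaffianAlpha_length ht]; omega, fun i hi => ?_⟩
  rcases Nat.eq_zero_or_pos i with rfl | hi0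
  · rw [pfaffianAlpha_getD_zero, List.getD_eq_getElem _ _ hi]
    exact hpos _ (List.getElem_mem _)
  · rcases Nat.lt_or_ge i (2 * t - 1) with hlt | hge
    · have := hβ.getD_add_sub_le (i := 1) hi0 hi
      rw [pfaffianAlpha_getD_of_lt hi0 hlt]
      omega
    · have hs : s = t := by omega
      rw [show i = 2 * t - 1 by omega, pfaffianAlpha_getD_last ht]
      exact hlast hs

lemma not_pfLe_pfaffianAlpha_iff (ht : 1 ≤ t) (hab : a + 2 * t - 2 ≤ b) {s : ℕ} (hs : 1 ≤ s)
    (hst : s ≤ t) {β : List ℕ} (hβ : β.IsChain (· < ·)) (hlen : β.length = 2 * s)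
    (hpos : ∀ x ∈ β, 1 ≤ x) :
    ¬ pfLe (pfaffianAlpha t a b) β ↔
      β.getD 1 0 ≤ a - 1 ∨ (s = t ∧ β.getD (2 * t - 1) 0 ≤ b - 1) := by
  have hpos_getD : ∀ i < β.length, 1 ≤ β.getD i 0 := fun i hi => by
    rw [List.getD_eq_getElem _ _ hi]
    exact hpos _ (List.getElem_mem _)
  constructor
  · intro hnot
    by_contra! hcon
    exact hnot (pfLe_pfaffianAlpha ht hst hβ hlen hpos (by omega)
      (fun hs => by have := hcon.2 hs; omega))
  · rintro (h1 | ⟨rfl, hlast⟩) ⟨-, hle⟩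
    · have := hle 1 (by omega)
      have := le_pfaffianAlpha_getD ht hab le_rfl (by omega) (a := a)
      have := hpos_getD 1 (by omega)
      omega
    · have := hle (2 * s - 1) (by omega)
      rw [pfaffianAlpha_getD_last ht] at this
      have := hpos_getD (2 * s - 1) (by omega)
      omega

end pfaffianAlpha

theorem generators_description_general (n t a b : ℕ) (ht : 1 ≤ t)
    (hab : a + 2 * t - 2 ≤ b) :
    let αL : List ℕ := 1 :: ((List.range (2 * t - 2)).map (· + a) ++ [b])
    (∀ s : ℕ, 1 ≤ s → s ≤ t → ∀ β : List ℕ, β.Chain' (· < ·) → β.length = 2 * s →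
      (∀ x ∈ β, 1 ≤ x ∧ x ≤ n) →
      (¬ pfLe αL β ↔
        (β.getD 1 0 ≤ a - 1 ∨ (s = t ∧ β.getD (2 * t - 1) 0 ≤ b - 1)))) ∧
    ({β : List ℕ | ∃ s : ℕ, 1 ≤ s ∧ s ≤ t ∧ β.Chain' (· < ·) ∧ β.length = 2 * s ∧
        (∀ x ∈ β, 1 ≤ x ∧ x ≤ n) ∧ ¬ pfLe αL β} =
      {β : List ℕ | ∃ s : ℕ, 1 ≤ s ∧ s ≤ t ∧ β.Chain' (· < ·) ∧ β.length = 2 * s ∧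
        (∀ x ∈ β, 1 ≤ x ∧ x ≤ n) ∧ β.getD 1 0 ≤ a - 1} ∪
      {β : List ℕ | β.Chain' (· < ·) ∧ β.length = 2 * t ∧
        (∀ x ∈ β, 1 ≤ x ∧ x ≤ n) ∧ β.getD (2 * t - 1) 0 ≤ b - 1}) := by
  intro αL
  have key : ∀ s, 1 ≤ s → s ≤ t → ∀ β : List ℕ, β.IsChain (· < ·) → β.length = 2 * s →
      (∀ x ∈ β, 1 ≤ x ∧ x ≤ n) →
      (¬ pfLe αL β ↔ β.getD 1 0 ≤ a - 1 ∨ (s = t ∧ β.getD (2 * t - 1) 0 ≤ b - 1)) :=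
    fun s hs hst β hβ hlen hbd =>
      not_pfLe_pfaffianAlpha_iff ht hab hs hst hβ hlen fun x hx => (hbd x hx).1
  refine ⟨key, Set.ext fun β => ⟨?_, ?_⟩⟩
  · rintro ⟨s, hs, hst, hβ, hlen, hbd, hnot⟩
    rcases (key s hs hst β hβ hlen hbd).mp hnot with h1 | ⟨rfl, hlast⟩
    · exact Or.inl ⟨s, hs, hst, hβ, hlen, hbd, h1⟩
    · exact Or.inr ⟨hβ, hlen, hbd, hlast⟩
  · rintro (⟨s, hs, hst, hβ, hlen, hbd, h1⟩ | ⟨hβ, hlen, hbd, hlast⟩)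
    · exact ⟨s, hs, hst, hβ, hlen, hbd, (key s hs hst β hβ hlen hbd).mpr (Or.inl h1)⟩
    · exact ⟨t, ht, le_rfl, hβ, hlen, hbd,
        (key t ht le_rfl β hβ hlen hbd).mpr (Or.inr ⟨rfl, hlast⟩)⟩

/-- For `α = [1, a, a+1, ..., a+2t-3, b]` and a strictly increasing `β = [b_1,...,b_{2s}]`
with `s ≤ t`, one has `β ≱ α` iff `b_2 ≤ a - 1`, or `s = t` and `b_{2t} ≤ b - 1`.
Consequently the natural generators of `I_α(X)` of size at most `2t` are exactly the
Pfaffians `[c,d,*,...,*]` with `c < d ≤ a-1` together with the `2t`-Pfaffians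
`[e_1,...,e_{2t}]` with `e_{2t} ≤ b-1`. -/
theorem generators_description (n t a b : ℕ) (ht : 1 ≤ t) (ha : 2 ≤ a)
    (hab : a + 2 * t - 2 ≤ b) :
    let αL : List ℕ := 1 :: ((List.range (2 * t - 2)).map (· + a) ++ [b])
    (∀ s : ℕ, 1 ≤ s → s ≤ t → ∀ β : List ℕ, β.Chain' (· < ·) → β.length = 2 * s →
      (∀ x ∈ β, 1 ≤ x ∧ x ≤ n) →
      (¬ pfLe αL β ↔
        (β.getD 1 0 ≤ a - 1 ∨ (s = t ∧ β.getD (2 * t - 1) 0 ≤ b - 1)))) ∧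
    ({β : List ℕ | ∃ s : ℕ, 1 ≤ s ∧ s ≤ t ∧ β.Chain' (· < ·) ∧ β.length = 2 * s ∧
        (∀ x ∈ β, 1 ≤ x ∧ x ≤ n) ∧ ¬ pfLe αL β} =
      {β : List ℕ | ∃ s : ℕ, 1 ≤ s ∧ s ≤ t ∧ β.Chain' (· < ·) ∧ β.length = 2 * s ∧
        (∀ x ∈ β, 1 ≤ x ∧ x ≤ n) ∧ β.getD 1 0 ≤ a - 1} ∪
      {β : List ℕ | β.Chain' (· < ·) ∧ β.length = 2 * t ∧
        (∀ x ∈ β, 1 ≤ x ∧ x ≤ n) ∧ β.getD (2 * t - 1) 0 ≤ b - 1}) :=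
  generators_description_general n t a b ht hab
end
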